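/- arXiv:2107.04260 — 3 statements merged into one kernel-verified Lean document; each statement's English description precedes it below -/
import Mathlib

section
/- Let d ≥ 1, d̂ ≤ d, h > 0, let I₀ be a nonempty subset of {1,…,d̂} and I₀ᶜ = {1,…,d} \ I₀. Let β̂ ∈ ℝ^d and let Ĝ be a symmetric d×d real matrix with Ĝ^{ij} = 0 whenever i ∈ I₀ or j ∈ I₀. Consider the boundary finite-difference transitions: for i ∈ I₀, displacement h e_i with rate β̂^i/h; for i ∈ I₀ᶜ, displacements ±h e_i with rates ±β̂^i/(2h) + Ĝ^{ii}/(2h²) − Σ_{j∈I₀ᶜ, j≠i}|Ĝ^{ij}|/(2h²); and for each unordered pair i < j with i, j ∈ I₀ᶜ, displacements ±h(e_i + e_j) each with rate (Ĝ^{ij})⁺/(2h²) and displacements ±h(e_i − e_j) each with rate (Ĝ^{ij})⁻/(2h²). Then the sum over all these transitions of (rate) × (displacement) equals β̂, and the sum of (rate) × (displacement)(displacement)ᵀ equals Ĝ + h Σ_{i∈I₀} β̂^i e_i e_iᵀ. -/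
open Finset Matrix

lemma sum_pairs_helper {M : Type*} [AddCommMonoid M] {d : ℕ} (s : Finset (Fin d))
    (F : Fin d → Fin d → M) :
    ∑ i ∈ s, ∑ j ∈ s.filter (fun j => i < j), (F i j + F j i)
      = ∑ i ∈ s, ∑ j ∈ s.erase i, F i j := by
  have key : ∀ i j : Fin d,
      (if i < j then F i j else 0) + (if j < i then F i j else 0)
        = (if j ≠ i then F i j else 0) := by
    intro i j
    rcases lt_trichotomy i j with hlt | heq | hgt
    · simp [hlt, hlt.ne', not_lt_of_gt hlt]
    · simp [heq]
    · simp [hgt, hgt.ne, not_lt_of_gt hgt]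
  calc ∑ i ∈ s, ∑ j ∈ s.filter (fun j => i < j), (F i j + F j i)
      = ∑ i ∈ s, ∑ j ∈ s, (if i < j then (F i j + F j i) else 0) := by
        simp [Finset.sum_filter]
    _ = (∑ i ∈ s, ∑ j ∈ s, (if i < j then F i j else 0))
        + ∑ i ∈ s, ∑ j ∈ s, (if i < j then F j i else 0) := by
        rw [← Finset.sum_add_distrib]
        refine Finset.sum_congr rfl fun i _ => ?_
        rw [← Finset.sum_add_distrib]
        refine Finset.sum_congr rfl fun j _ => ?_
        split <;> simp
    _ = (∑ i ∈ s, ∑ j ∈ s, (if i < j then F i j else 0))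
        + ∑ i ∈ s, ∑ j ∈ s, (if j < i then F i j else 0) := by
        congr 1
        rw [Finset.sum_comm]
    _ = ∑ i ∈ s, ∑ j ∈ s, (if j ≠ i then F i j else 0) := by
        rw [← Finset.sum_add_distrib]
        refine Finset.sum_congr rfl fun i _ => ?_
        rw [← Finset.sum_add_distrib]
        exact Finset.sum_congr rfl fun j _ => key i j
    _ = ∑ i ∈ s, ∑ j ∈ s.erase i, F i j := by
        refine Finset.sum_congr rfl fun i _ => ?_
        rw [← Finset.filter_ne' s i, Finset.sum_filter]

lemma pair_vmv {d : ℕ} (p q h : ℝ) (hh : h ≠ 0) (u v : Fin d → ℝ) :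
    (p / (2 * h ^ 2)) • vecMulVec (h • (u + v)) (h • (u + v))
      + (p / (2 * h ^ 2)) • vecMulVec (-(h • (u + v))) (-(h • (u + v)))
      + (q / (2 * h ^ 2)) • vecMulVec (h • (u - v)) (h • (u - v))
      + (q / (2 * h ^ 2)) • vecMulVec (-(h • (u - v))) (-(h • (u - v)))
    = (p + q) • (vecMulVec u u + vecMulVec v v)
      + (p - q) • (vecMulVec u v + vecMulVec v u) := by
  ext k l
  simp only [Matrix.add_apply, Matrix.smul_apply, vecMulVec_apply, Pi.add_apply, Pi.sub_apply,
    Pi.smul_apply, Pi.neg_apply, smul_eq_mul]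
  field_simp
  ring

lemma diag_vmv {d : ℕ} (A B h : ℝ) (u : Fin d → ℝ) :
    A • vecMulVec (h • u) (h • u) + B • vecMulVec (-(h • u)) (-(h • u))
      = ((A + B) * h ^ 2) • vecMulVec u u := by
  ext k l
  simp only [Matrix.add_apply, Matrix.smul_apply, vecMulVec_apply, Pi.smul_apply, Pi.neg_apply,
    smul_eq_mul]
  ring

lemma sticky_vmv {d : ℕ} (b h : ℝ) (hh : h ≠ 0) (u : Fin d → ℝ) :
    (b / h) • vecMulVec (h • u) (h • u) = (h * b) • vecMulVec u u := by
  ext k l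
  simp only [Matrix.smul_apply, vecMulVec_apply, Pi.smul_apply, smul_eq_mul]
  field_simp

lemma pm_sub (c : ℝ) : max c 0 - max (-c) 0 = c := by
  rcases le_total c 0 with hc | hc
  · simp [max_eq_right hc, max_eq_left (neg_nonneg.2 hc)]
  · simp [max_eq_left hc, max_eq_right (neg_nonpos.2 hc)]

lemma pm_add (c : ℝ) : max c 0 + max (-c) 0 = |c| := by
  rcases le_total c 0 with hc | hc
  · simp [max_eq_right hc, max_eq_left (neg_nonneg.2 hc), abs_of_nonpos hc]
  · simp [max_eq_left hc, max_eq_right (neg_nonpos.2 hc), abs_of_nonneg hc]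

lemma Gsum_eq {d : ℕ} (G : Matrix (Fin d) (Fin d) ℝ) :
    G = ∑ i : Fin d, ∑ j : Fin d,
        G i j • vecMulVec (Pi.single i 1 : Fin d → ℝ) (Pi.single j 1 : Fin d → ℝ) := by
  nth_rewrite 1 [matrix_eq_sum_single G]
  refine Finset.sum_congr rfl fun i _ => Finset.sum_congr rfl fun j _ => ?_
  rw [← single_eq_single_vecMulVec_single, smul_single, smul_eq_mul, mul_one]

/-- Boundary finite-difference local consistency: with `I₀` the sticky
coordinates at zero (`Ĝ` vanishing on rows/columns in `I₀`), the boundary rates match the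
first moment `β̂` exactly and the second moment equals `Ĝ + h Σ_{i∈I₀} β̂^i e_i e_iᵀ`. -/
theorem stmt11 (d dhat : ℕ) (hd : 1 ≤ d) (hdhat : dhat ≤ d) (h : ℝ) (hh : 0 < h)
    (I0 : Finset (Fin d)) (hI0ne : I0.Nonempty) (hI0sub : ∀ i ∈ I0, (i : ℕ) < dhat)
    (β : Fin d → ℝ) (G : Matrix (Fin d) (Fin d) ℝ) (hGsymm : G.IsSymm)
    (hGzero : ∀ i j : Fin d, (i ∈ I0 ∨ j ∈ I0) → G i j = 0) :
    ((∑ i ∈ I0, (β i / h) • (h • (Pi.single i 1 : Fin d → ℝ)))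
      + (∑ i ∈ I0ᶜ,
        ((β i / (2 * h) + G i i / (2 * h ^ 2)
            - (∑ j ∈ I0ᶜ.erase i, |G i j|) / (2 * h ^ 2))
            • (h • (Pi.single i 1 : Fin d → ℝ))
          + (-(β i) / (2 * h) + G i i / (2 * h ^ 2)
            - (∑ j ∈ I0ᶜ.erase i, |G i j|) / (2 * h ^ 2))
            • (-(h • (Pi.single i 1 : Fin d → ℝ)))))
      + (∑ i ∈ I0ᶜ, ∑ j ∈ I0ᶜ.filter (fun j => i < j),
        ((max (G i j) 0 / (2 * h ^ 2))
            • (h • ((Pi.single i 1 : Fin d → ℝ) + (Pi.single j 1 : Fin d → ℝ)))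
          + (max (G i j) 0 / (2 * h ^ 2))
            • (-(h • ((Pi.single i 1 : Fin d → ℝ) + (Pi.single j 1 : Fin d → ℝ))))
          + (max (-(G i j)) 0 / (2 * h ^ 2))
            • (h • ((Pi.single i 1 : Fin d → ℝ) - (Pi.single j 1 : Fin d → ℝ)))
          + (max (-(G i j)) 0 / (2 * h ^ 2))
            • (-(h • ((Pi.single i 1 : Fin d → ℝ) - (Pi.single j 1 : Fin d → ℝ))))))
      = β) ∧
    ((∑ i ∈ I0, (β i / h)
          • vecMulVec (h • (Pi.single i 1 : Fin d → ℝ)) (h • (Pi.single i 1 : Fin d → ℝ)))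
      + (∑ i ∈ I0ᶜ,
        ((β i / (2 * h) + G i i / (2 * h ^ 2)
            - (∑ j ∈ I0ᶜ.erase i, |G i j|) / (2 * h ^ 2))
            • vecMulVec (h • (Pi.single i 1 : Fin d → ℝ)) (h • (Pi.single i 1 : Fin d → ℝ))
          + (-(β i) / (2 * h) + G i i / (2 * h ^ 2)
            - (∑ j ∈ I0ᶜ.erase i, |G i j|) / (2 * h ^ 2))
            • vecMulVec (-(h • (Pi.single i 1 : Fin d → ℝ)))
                (-(h • (Pi.single i 1 : Fin d → ℝ)))))
      + (∑ i ∈ I0ᶜ, ∑ j ∈ I0ᶜ.filter (fun j => i < j),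
        ((max (G i j) 0 / (2 * h ^ 2))
            • vecMulVec (h • ((Pi.single i 1 : Fin d → ℝ) + (Pi.single j 1 : Fin d → ℝ)))
                (h • ((Pi.single i 1 : Fin d → ℝ) + (Pi.single j 1 : Fin d → ℝ)))
          + (max (G i j) 0 / (2 * h ^ 2))
            • vecMulVec (-(h • ((Pi.single i 1 : Fin d → ℝ) + (Pi.single j 1 : Fin d → ℝ))))
                (-(h • ((Pi.single i 1 : Fin d → ℝ) + (Pi.single j 1 : Fin d → ℝ))))
          + (max (-(G i j)) 0 / (2 * h ^ 2))
            • vecMulVec (h • ((Pi.single i 1 : Fin d → ℝ) - (Pi.single j 1 : Fin d → ℝ)))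
                (h • ((Pi.single i 1 : Fin d → ℝ) - (Pi.single j 1 : Fin d → ℝ)))
          + (max (-(G i j)) 0 / (2 * h ^ 2))
            • vecMulVec (-(h • ((Pi.single i 1 : Fin d → ℝ) - (Pi.single j 1 : Fin d → ℝ))))
                (-(h • ((Pi.single i 1 : Fin d → ℝ) - (Pi.single j 1 : Fin d → ℝ))))))
      = G + h • (∑ i ∈ I0, β i
          • vecMulVec (Pi.single i 1 : Fin d → ℝ) (Pi.single i 1 : Fin d → ℝ))) := by
  have hne : h ≠ 0 := hh.ne'
  constructor
  · -- first moment
    have h3 : (∑ i ∈ I0ᶜ, ∑ j ∈ I0ᶜ.filter (fun j => i < j),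
        ((max (G i j) 0 / (2 * h ^ 2))
            • (h • ((Pi.single i 1 : Fin d → ℝ) + (Pi.single j 1 : Fin d → ℝ)))
          + (max (G i j) 0 / (2 * h ^ 2))
            • (-(h • ((Pi.single i 1 : Fin d → ℝ) + (Pi.single j 1 : Fin d → ℝ))))
          + (max (-(G i j)) 0 / (2 * h ^ 2))
            • (h • ((Pi.single i 1 : Fin d → ℝ) - (Pi.single j 1 : Fin d → ℝ)))
          + (max (-(G i j)) 0 / (2 * h ^ 2))
            • (-(h • ((Pi.single i 1 : Fin d → ℝ) - (Pi.single j 1 : Fin d → ℝ))))))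
        = 0 := by
      refine Finset.sum_eq_zero fun i _ => Finset.sum_eq_zero fun j _ => ?_
      simp only [smul_neg]
      abel
    have h1 : (∑ i ∈ I0, (β i / h) • (h • (Pi.single i 1 : Fin d → ℝ)))
        = ∑ i ∈ I0, β i • (Pi.single i 1 : Fin d → ℝ) := by
      refine Finset.sum_congr rfl fun i _ => ?_
      rw [smul_smul, div_mul_cancel₀ _ hne]
    have h2 : (∑ i ∈ I0ᶜ,
        ((β i / (2 * h) + G i i / (2 * h ^ 2)
            - (∑ j ∈ I0ᶜ.erase i, |G i j|) / (2 * h ^ 2))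
            • (h • (Pi.single i 1 : Fin d → ℝ))
          + (-(β i) / (2 * h) + G i i / (2 * h ^ 2)
            - (∑ j ∈ I0ᶜ.erase i, |G i j|) / (2 * h ^ 2))
            • (-(h • (Pi.single i 1 : Fin d → ℝ)))))
        = ∑ i ∈ I0ᶜ, β i • (Pi.single i 1 : Fin d → ℝ) := by
      refine Finset.sum_congr rfl fun i _ => ?_
      rw [smul_neg, smul_smul, smul_smul, ← neg_smul, ← add_smul]
      congr 1
      field_simp
      ring
    rw [h1, h2, h3, add_zero, Finset.sum_add_sum_compl]
    have hsingle : ∀ i : Fin d, β i • (Pi.single i 1 : Fin d → ℝ) = Pi.single i (β i) := by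
      intro i
      rw [← Pi.single_smul, smul_eq_mul, mul_one]
    simp_rw [hsingle]
    exact Finset.univ_sum_single β
  · -- second moment
    set E : Fin d → Fin d → Matrix (Fin d) (Fin d) ℝ :=
      fun i j => vecMulVec (Pi.single i 1 : Fin d → ℝ) (Pi.single j 1 : Fin d → ℝ) with hE
    have hT1 : (∑ i ∈ I0, (β i / h)
          • vecMulVec (h • (Pi.single i 1 : Fin d → ℝ)) (h • (Pi.single i 1 : Fin d → ℝ)))
        = h • ∑ i ∈ I0, β i • E i i := by
      rw [Finset.smul_sum]
      refine Finset.sum_congr rfl fun i _ => ?_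
      rw [sticky_vmv _ _ hne, smul_smul]
    have hT2 : (∑ i ∈ I0ᶜ,
        ((β i / (2 * h) + G i i / (2 * h ^ 2)
            - (∑ j ∈ I0ᶜ.erase i, |G i j|) / (2 * h ^ 2))
            • vecMulVec (h • (Pi.single i 1 : Fin d → ℝ)) (h • (Pi.single i 1 : Fin d → ℝ))
          + (-(β i) / (2 * h) + G i i / (2 * h ^ 2)
            - (∑ j ∈ I0ᶜ.erase i, |G i j|) / (2 * h ^ 2))
            • vecMulVec (-(h • (Pi.single i 1 : Fin d → ℝ)))
                (-(h • (Pi.single i 1 : Fin d → ℝ)))))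
        = ∑ i ∈ I0ᶜ, (G i i - ∑ j ∈ I0ᶜ.erase i, |G i j|) • E i i := by
      refine Finset.sum_congr rfl fun i _ => ?_
      rw [diag_vmv]
      congr 1
      field_simp
      ring
    have hT3 : (∑ i ∈ I0ᶜ, ∑ j ∈ I0ᶜ.filter (fun j => i < j),
        ((max (G i j) 0 / (2 * h ^ 2))
            • vecMulVec (h • ((Pi.single i 1 : Fin d → ℝ) + (Pi.single j 1 : Fin d → ℝ)))
                (h • ((Pi.single i 1 : Fin d → ℝ) + (Pi.single j 1 : Fin d → ℝ)))
          + (max (G i j) 0 / (2 * h ^ 2))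
            • vecMulVec (-(h • ((Pi.single i 1 : Fin d → ℝ) + (Pi.single j 1 : Fin d → ℝ))))
                (-(h • ((Pi.single i 1 : Fin d → ℝ) + (Pi.single j 1 : Fin d → ℝ))))
          + (max (-(G i j)) 0 / (2 * h ^ 2))
            • vecMulVec (h • ((Pi.single i 1 : Fin d → ℝ) - (Pi.single j 1 : Fin d → ℝ)))
                (h • ((Pi.single i 1 : Fin d → ℝ) - (Pi.single j 1 : Fin d → ℝ)))
          + (max (-(G i j)) 0 / (2 * h ^ 2))
            • vecMulVec (-(h • ((Pi.single i 1 : Fin d → ℝ) - (Pi.single j 1 : Fin d → ℝ))))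
                (-(h • ((Pi.single i 1 : Fin d → ℝ) - (Pi.single j 1 : Fin d → ℝ))))))
        = ∑ i ∈ I0ᶜ, ∑ j ∈ I0ᶜ.erase i, (|G i j| • E i i + G i j • E i j) := by
      rw [← sum_pairs_helper I0ᶜ (fun i j => |G i j| • E i i + G i j • E i j)]
      refine Finset.sum_congr rfl fun i _ => Finset.sum_congr rfl fun j _ => ?_
      rw [pair_vmv (max (G i j) 0) (max (-(G i j)) 0) h hne, pm_add, pm_sub,
        hGsymm.apply i j]
      simp only [hE, smul_add]
      abel
    rw [hT1, hT2, hT3]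
    have hG : (∑ i ∈ I0ᶜ, ∑ j ∈ I0ᶜ, G i j • E i j) = G := by
      have hinner : ∀ i : Fin d, (∑ j ∈ I0ᶜ, G i j • E i j) = ∑ j : Fin d, G i j • E i j := by
        intro i
        refine Finset.sum_subset (Finset.subset_univ _) fun j _ hj => ?_
        rw [hGzero i j (Or.inr (by simpa using hj)), zero_smul]
      calc ∑ i ∈ I0ᶜ, ∑ j ∈ I0ᶜ, G i j • E i j
          = ∑ i ∈ I0ᶜ, ∑ j : Fin d, G i j • E i j :=
            Finset.sum_congr rfl fun i _ => hinner i
        _ = ∑ i : Fin d, ∑ j : Fin d, G i j • E i j := by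
            refine Finset.sum_subset (Finset.subset_univ _) fun i _ hi => ?_
            refine Finset.sum_eq_zero fun j _ => ?_
            rw [hGzero i j (Or.inl (by simpa using hi)), zero_smul]
        _ = G := (Gsum_eq G).symm
    have key : (∑ i ∈ I0ᶜ, (G i i - ∑ j ∈ I0ᶜ.erase i, |G i j|) • E i i)
        + (∑ i ∈ I0ᶜ, ∑ j ∈ I0ᶜ.erase i, (|G i j| • E i i + G i j • E i j))
        = ∑ i ∈ I0ᶜ, ∑ j ∈ I0ᶜ, G i j • E i j := by
      rw [← Finset.sum_add_distrib]
      refine Finset.sum_congr rfl fun i hi => ?_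
      rw [Finset.sum_add_distrib, sub_smul, ← Finset.sum_smul]
      have habel : G i i • E i i - (∑ j ∈ I0ᶜ.erase i, |G i j|) • E i i
            + ((∑ j ∈ I0ᶜ.erase i, |G i j|) • E i i + ∑ j ∈ I0ᶜ.erase i, G i j • E i j)
          = G i i • E i i + ∑ j ∈ I0ᶜ.erase i, G i j • E i j := by abel
      rw [habel]
      exact Finset.add_sum_erase I0ᶜ (fun j => G i j • E i j) hi
    calc h • (∑ i ∈ I0, β i • E i i)
          + (∑ i ∈ I0ᶜ, (G i i - ∑ j ∈ I0ᶜ.erase i, |G i j|) • E i i)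
          + (∑ i ∈ I0ᶜ, ∑ j ∈ I0ᶜ.erase i, (|G i j| • E i i + G i j • E i j))
        = ((∑ i ∈ I0ᶜ, (G i i - ∑ j ∈ I0ᶜ.erase i, |G i j|) • E i i)
          + (∑ i ∈ I0ᶜ, ∑ j ∈ I0ᶜ.erase i, (|G i j| • E i i + G i j • E i j)))
          + h • (∑ i ∈ I0, β i • E i i) := by abel
      _ = G + h • (∑ i ∈ I0, β i • E i i) := by rw [key, hG]
end

section
/- Let d ≥ 1, let A be a symmetric d×d real matrix, μ ∈ ℝ^d, h > 0, and fix x ∈ ℝ^d. Let f : ℝ^d → ℝ be the quadratic function f(y) = c + ⟨b, y − x⟩ + ½ ⟨y − x, H(y − x)⟩ for some c ∈ ℝ, b ∈ ℝ^d and a symmetric d×d matrix H. Then for the finite-difference transitions at x (displacement ±h e_i with rate ±μ^i/(2h) + A^{ii}/(2h²) − Σ_{j≠i}|A^{ij}|/(2h²); for each unordered pair i < j, displacements ±h(e_i + e_j) each with rate (A^{ij})⁺/(2h²) and ±h(e_i − e_j) each with rate (A^{ij})⁻/(2h²)), the Markov chain generator applied to f is exact: Σ over all transitions of (rate) × (f(x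 + displacement) − f(x)) = ⟨b, μ⟩ + ½ Σ_{k,l=1}^d A^{kl} H^{kl}. -/
open Finset Matrix

theorem swap_lemma (d : ℕ) (F : Fin d → Fin d → ℝ) :
    ∑ i : Fin d, ∑ j ∈ univ.filter (fun j => i < j), (F i j + F j i)
      = ∑ i : Fin d, ∑ j ∈ univ.erase i, F i j := by
  have e1 : ∀ i : Fin d, (univ.erase i) = univ.filter (fun j => j ≠ i) := by
    intro i; ext j; simp
  simp only [e1, Finset.sum_filter]
  have step : ∀ i : Fin d, ∑ j : Fin d, (if i < j then F i j + F j i else 0)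
      = (∑ j : Fin d, (if i < j then F i j else 0))
        + (∑ j : Fin d, (if i < j then F j i else 0)) := by
    intro i
    rw [← Finset.sum_add_distrib]
    apply Finset.sum_congr rfl; intro j _; split <;> simp
  simp only [step, Finset.sum_add_distrib]
  have swap : ∑ i : Fin d, ∑ j : Fin d, (if i < j then F j i else 0)
      = ∑ i : Fin d, ∑ j : Fin d, (if j < i then F i j else 0) := by
    rw [Finset.sum_comm]
  rw [swap, ← Finset.sum_add_distrib]
  apply Finset.sum_congr rfl; intro i _
  rw [← Finset.sum_add_distrib]
  apply Finset.sum_congr rfl; intro j _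
  rcases lt_trichotomy i j with hlt | heq | hgt
  · simp [hlt, not_lt_of_gt hlt, hlt.ne']
  · simp [heq]
  · simp [hgt, not_lt_of_gt hgt, hgt.ne]

/-- The finite-difference Markov chain generator is exact on quadratic
functions `f(y) = c + ⟨b, y−x⟩ + ½⟨y−x, H(y−x)⟩`: the sum over all transitions of
rate × (f(x + displacement) − f(x)) equals `⟨b, μ⟩ + ½ Σ_{k,l} A^{kl} H^{kl}`. -/
theorem stmt14 (d : ℕ) (hd : 1 ≤ d) (A : Matrix (Fin d) (Fin d) ℝ) (hA : A.IsSymm)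
    (μ : Fin d → ℝ) (h : ℝ) (hh : 0 < h) (x : Fin d → ℝ)
    (c : ℝ) (b : Fin d → ℝ) (H : Matrix (Fin d) (Fin d) ℝ) (hH : H.IsSymm)
    (f : (Fin d → ℝ) → ℝ)
    (hf : ∀ y : Fin d → ℝ,
      f y = c + b ⬝ᵥ (y - x) + (1 / 2) * ((y - x) ⬝ᵥ H.mulVec (y - x))) :
    (∑ i : Fin d,
      ((μ i / (2 * h) + A i i / (2 * h ^ 2)
          - (∑ j ∈ univ.erase i, |A i j|) / (2 * h ^ 2))
          * (f (x + h • (Pi.single i 1 : Fin d → ℝ)) - f x)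
        + (-(μ i) / (2 * h) + A i i / (2 * h ^ 2)
          - (∑ j ∈ univ.erase i, |A i j|) / (2 * h ^ 2))
          * (f (x - h • (Pi.single i 1 : Fin d → ℝ)) - f x)))
    + (∑ i : Fin d, ∑ j ∈ univ.filter (fun j => i < j),
      ((max (A i j) 0 / (2 * h ^ 2))
          * (f (x + h • ((Pi.single i 1 : Fin d → ℝ) + (Pi.single j 1 : Fin d → ℝ))) - f x)
        + (max (A i j) 0 / (2 * h ^ 2))
          * (f (x - h • ((Pi.single i 1 : Fin d → ℝ) + (Pi.single j 1 : Fin d → ℝ))) - f x)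
        + (max (-(A i j)) 0 / (2 * h ^ 2))
          * (f (x + h • ((Pi.single i 1 : Fin d → ℝ) - (Pi.single j 1 : Fin d → ℝ))) - f x)
        + (max (-(A i j)) 0 / (2 * h ^ 2))
          * (f (x - h • ((Pi.single i 1 : Fin d → ℝ) - (Pi.single j 1 : Fin d → ℝ))) - f x)))
    = b ⬝ᵥ μ + (1 / 2) * ∑ k : Fin d, ∑ l : Fin d, A k l * H k l := by
  have hne : h ≠ 0 := ne_of_gt hh
  have hAs : ∀ i j : Fin d, A j i = A i j := fun i j => hA.apply i j
  -- displacement formula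
  have K : ∀ (ε : ℝ) (w : Fin d → ℝ), f (x + ε • w) - f x
      = ε * (b ⬝ᵥ w) + 1 / 2 * (ε ^ 2 * (w ⬝ᵥ H.mulVec w)) := by
    intro ε w
    rw [hf, hf]
    have h1 : x + ε • w - x = ε • w := by abel
    have h2 : x - x = (0 : Fin d → ℝ) := by abel
    rw [h1, h2]
    simp [smul_dotProduct, dotProduct_smul, Matrix.mulVec_smul, smul_eq_mul]
    ring
  have Ksub : ∀ (ε : ℝ) (w : Fin d → ℝ), f (x - ε • w) - f x
      = -(ε * (b ⬝ᵥ w)) + 1 / 2 * (ε ^ 2 * (w ⬝ᵥ H.mulVec w)) := by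
    intro ε w
    have hx : x - ε • w = x + (-ε) • w := by module
    rw [hx, K]; ring
  have q : ∀ i j : Fin d, (Pi.single i 1 : Fin d → ℝ) ⬝ᵥ H.mulVec (Pi.single j 1) = H i j := by
    intro i j; simp [Matrix.mulVec_single, single_dotProduct]
  have bq : ∀ i : Fin d, b ⬝ᵥ (Pi.single i 1 : Fin d → ℝ) = b i := by
    intro i; simp
  -- quadratic forms on pair displacements
  have qadd : ∀ i j : Fin d,
      ((Pi.single i 1 : Fin d → ℝ) + Pi.single j 1) ⬝ᵥ
        H.mulVec ((Pi.single i 1 : Fin d → ℝ) + Pi.single j 1)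
        = H i i + H i j + H j i + H j j := by
    intro i j
    rw [Matrix.mulVec_add, dotProduct_add, add_dotProduct, add_dotProduct, q, q, q, q]
    ring
  have qsub : ∀ i j : Fin d,
      ((Pi.single i 1 : Fin d → ℝ) - Pi.single j 1) ⬝ᵥ
        H.mulVec ((Pi.single i 1 : Fin d → ℝ) - Pi.single j 1)
        = H i i - H i j - H j i + H j j := by
    intro i j
    rw [Matrix.mulVec_sub, dotProduct_sub, sub_dotProduct, sub_dotProduct, q, q, q, q]
    ring
  have badd : ∀ i j : Fin d, b ⬝ᵥ ((Pi.single i 1 : Fin d → ℝ) + Pi.single j 1)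
      = b i + b j := by intro i j; rw [dotProduct_add, bq, bq]
  have bsub : ∀ i j : Fin d, b ⬝ᵥ ((Pi.single i 1 : Fin d → ℝ) - Pi.single j 1)
      = b i - b j := by intro i j; rw [dotProduct_sub, bq, bq]
  -- rewrite the diagonal sum
  have diag : ∀ i : Fin d,
      (μ i / (2 * h) + A i i / (2 * h ^ 2)
          - (∑ j ∈ univ.erase i, |A i j|) / (2 * h ^ 2))
          * (f (x + h • (Pi.single i 1 : Fin d → ℝ)) - f x)
        + (-(μ i) / (2 * h) + A i i / (2 * h ^ 2)
          - (∑ j ∈ univ.erase i, |A i j|) / (2 * h ^ 2))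
          * (f (x - h • (Pi.single i 1 : Fin d → ℝ)) - f x)
      = b i * μ i + 1 / 2 * (A i i * H i i)
          - 1 / 2 * ((∑ j ∈ univ.erase i, |A i j|) * H i i) := by
    intro i
    rw [K, Ksub, bq, q]
    field_simp
    ring
  -- rewrite the pair sum
  have pair : ∀ i j : Fin d,
      (max (A i j) 0 / (2 * h ^ 2))
          * (f (x + h • ((Pi.single i 1 : Fin d → ℝ) + (Pi.single j 1 : Fin d → ℝ))) - f x)
        + (max (A i j) 0 / (2 * h ^ 2))
          * (f (x - h • ((Pi.single i 1 : Fin d → ℝ) + (Pi.single j 1 : Fin d → ℝ))) - f x)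
        + (max (-(A i j)) 0 / (2 * h ^ 2))
          * (f (x + h • ((Pi.single i 1 : Fin d → ℝ) - (Pi.single j 1 : Fin d → ℝ))) - f x)
        + (max (-(A i j)) 0 / (2 * h ^ 2))
          * (f (x - h • ((Pi.single i 1 : Fin d → ℝ) - (Pi.single j 1 : Fin d → ℝ))) - f x)
      = (1 / 2 * |A i j| * H i i + 1 / 2 * (A i j * H i j))
        + (1 / 2 * |A j i| * H j j + 1 / 2 * (A j i * H j i)) := by
    intro i j
    rw [K, Ksub, K, Ksub, badd, bsub, qadd, qsub, hAs i j]
    rcases le_total 0 (A i j) with hc | hc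
    · rw [abs_of_nonneg hc, max_eq_left hc,
        max_eq_right (neg_nonpos.mpr hc)]
      field_simp
      ring
    · rw [abs_of_nonpos hc, max_eq_right hc,
        max_eq_left (neg_nonneg.mpr hc)]
      field_simp
      ring
  simp only [diag]
  have pairsum : (∑ i : Fin d, ∑ j ∈ univ.filter (fun j => i < j),
      ((max (A i j) 0 / (2 * h ^ 2))
          * (f (x + h • ((Pi.single i 1 : Fin d → ℝ) + (Pi.single j 1 : Fin d → ℝ))) - f x)
        + (max (A i j) 0 / (2 * h ^ 2))
          * (f (x - h • ((Pi.single i 1 : Fin d → ℝ) + (Pi.single j 1 : Fin d → ℝ))) - f x)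
        + (max (-(A i j)) 0 / (2 * h ^ 2))
          * (f (x + h • ((Pi.single i 1 : Fin d → ℝ) - (Pi.single j 1 : Fin d → ℝ))) - f x)
        + (max (-(A i j)) 0 / (2 * h ^ 2))
          * (f (x - h • ((Pi.single i 1 : Fin d → ℝ) - (Pi.single j 1 : Fin d → ℝ))) - f x)))
      = ∑ i : Fin d, ∑ j ∈ univ.erase i,
          (1 / 2 * |A i j| * H i i + 1 / 2 * (A i j * H i j)) := by
    rw [← swap_lemma d (fun i j => 1 / 2 * |A i j| * H i i + 1 / 2 * (A i j * H i j))]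
    exact Finset.sum_congr rfl fun i _ => Finset.sum_congr rfl fun j _ => pair i j
  rw [pairsum]
  -- final summation identity
  have hbm : b ⬝ᵥ μ = ∑ i : Fin d, b i * μ i := rfl
  rw [hbm, ← Finset.sum_add_distrib, Finset.mul_sum, ← Finset.sum_add_distrib]
  apply Finset.sum_congr rfl
  intro i _
  have hrow : ∑ l : Fin d, A i l * H i l
      = A i i * H i i + ∑ l ∈ univ.erase i, A i l * H i l :=
    (Finset.add_sum_erase univ (fun l => A i l * H i l) (mem_univ i)).symm
  rw [hrow, Finset.sum_add_distrib]
  have e1 : ∑ j ∈ univ.erase i, 1 / 2 * |A i j| * H i i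
      = 1 / 2 * ((∑ j ∈ univ.erase i, |A i j|) * H i i) := by
    rw [Finset.sum_mul, Finset.mul_sum]
    exact Finset.sum_congr rfl fun j _ => by ring
  have e2 : ∑ j ∈ univ.erase i, 1 / 2 * (A i j * H i j)
      = 1 / 2 * ∑ j ∈ univ.erase i, A i j * H i j := by
    rw [Finset.mul_sum]
  rw [e1, e2]
  ring
end

section
/- Let d ≥ 1, h > 0, μ ∈ ℝ^d, and let A be a symmetric positive semidefinite d×d real matrix with orthonormal eigenvectors u_1,…,u_d and eigenvalues λ_1,…,λ_d. Fix x ∈ ℝ^d and let f : ℝ^d → ℝ be the quadratic function f(y) = c + ⟨b, y − x⟩ + ½ ⟨y − x, H(y − x)⟩ for some c ∈ ℝ, b ∈ ℝ^d and a symmetric d×d matrix H. Then for the eigendecomposition transitions at x (rate 1/h for displacement hμ and rate λ_i/(2h²) for each of ±h u_i), the Markov chain generator applied to f satisfies: Σ over all transitions of (rate) × (f(x + displacement) − f(x)) = ⟨b, μ⟩ + ½ Σ_{k,l=1}^d A^{kl} H^{kl} + (h/2) ⟨μ, Hμ⟩. In particular the discrepancy from the diffusion generator ⟨b,μ⟩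 + ½ Σ_{k,l} A^{kl} H^{kl} is exactly (h/2)⟨μ, Hμ⟩, which is of first order in h. -/
open Finset Matrix

lemma spec_decomp (d : ℕ) (A : Matrix (Fin d) (Fin d) ℝ)
    (u : Fin d → (Fin d → ℝ)) (lam : Fin d → ℝ)
    (horth : ∀ i j : Fin d, u i ⬝ᵥ u j = if i = j then 1 else 0)
    (heig : ∀ i : Fin d, A.mulVec (u i) = lam i • u i) :
    ∀ k l, A k l = ∑ i, lam i * (u i k * u i l) := by
  intro k l
  set U : Matrix (Fin d) (Fin d) ℝ := Matrix.of u with hU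
  have hUUT : U * Uᵀ = 1 := by
    ext i j
    simpa [hU, Matrix.mul_apply, dotProduct, Matrix.one_apply] using horth i j
  have hUTU : Uᵀ * U = 1 := mul_eq_one_comm.mp hUUT
  have hAUT : ∀ k j, (A * Uᵀ) k j = lam j * u j k := by
    intro k j
    have : (A * Uᵀ) k j = A.mulVec (u j) k := by
      simp only [Matrix.mul_apply, Matrix.transpose_apply, Matrix.mulVec, dotProduct, hU,
        Matrix.of_apply]
    rw [this, heig j]
    simp
  have hA' : A = (A * Uᵀ) * U := by
    rw [Matrix.mul_assoc, hUTU, Matrix.mul_one]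
  calc A k l = ((A * Uᵀ) * U) k l := by rw [← hA']
    _ = ∑ j, (A * Uᵀ) k j * u j l := by
        simp only [Matrix.mul_apply, hU, Matrix.of_apply]
    _ = ∑ i, lam i * (u i k * u i l) := by
        refine Finset.sum_congr rfl fun j _ => ?_
        rw [hAUT]; ring

/-- The eigendecomposition Markov chain generator applied to a quadratic
`f(y) = c + ⟨b, y−x⟩ + ½⟨y−x, H(y−x)⟩` equals
`⟨b, μ⟩ + ½ Σ_{k,l} A^{kl} H^{kl} + (h/2)⟨μ, Hμ⟩`, i.e. its discrepancy from the diffusion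
generator is exactly `(h/2)⟨μ, Hμ⟩`, first order in `h`. -/
theorem stmt15 (d : ℕ) (hd : 1 ≤ d) (h : ℝ) (hh : 0 < h) (μ : Fin d → ℝ)
    (A : Matrix (Fin d) (Fin d) ℝ) (hA : A.PosSemidef)
    (u : Fin d → (Fin d → ℝ)) (lam : Fin d → ℝ)
    (horth : ∀ i j : Fin d, u i ⬝ᵥ u j = if i = j then 1 else 0)
    (heig : ∀ i : Fin d, A.mulVec (u i) = lam i • u i)
    (x : Fin d → ℝ) (c : ℝ) (b : Fin d → ℝ)
    (H : Matrix (Fin d) (Fin d) ℝ) (hH : H.IsSymm)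
    (f : (Fin d → ℝ) → ℝ)
    (hf : ∀ y : Fin d → ℝ,
      f y = c + b ⬝ᵥ (y - x) + (1 / 2) * ((y - x) ⬝ᵥ H.mulVec (y - x))) :
    (1 / h) * (f (x + h • μ) - f x)
      + (∑ i : Fin d,
          ((lam i / (2 * h ^ 2)) * (f (x + h • u i) - f x)
            + (lam i / (2 * h ^ 2)) * (f (x - h • u i) - f x)))
    = b ⬝ᵥ μ + (1 / 2) * (∑ k : Fin d, ∑ l : Fin d, A k l * H k l)
      + (h / 2) * (μ ⬝ᵥ H.mulVec μ) := by
  have hne : h ≠ 0 := ne_of_gt hh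
  have hfx : f x = c := by
    simp [hf x, dotProduct]
  have hquad : ∀ v : Fin d → ℝ,
      f (x + v) - f x = b ⬝ᵥ v + (1 / 2) * (v ⬝ᵥ H.mulVec v) := by
    intro v
    rw [hf (x + v), hfx, add_sub_cancel_left]
    ring
  have hquad' : ∀ v : Fin d → ℝ,
      f (x - v) - f x = - (b ⬝ᵥ v) + (1 / 2) * (v ⬝ᵥ H.mulVec v) := by
    intro v
    have := hquad (-v)
    rw [← sub_eq_add_neg] at this
    simp only [Matrix.mulVec_neg, dotProduct_neg, neg_dotProduct, neg_neg] at this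
    exact this
  have hs : ∀ (v : Fin d → ℝ), (h • v) ⬝ᵥ H.mulVec (h • v) = h ^ 2 * (v ⬝ᵥ H.mulVec v) := by
    intro v
    rw [Matrix.mulVec_smul, smul_dotProduct, dotProduct_smul]
    simp [smul_eq_mul]; ring
  have h1 : (1 / h) * (f (x + h • μ) - f x)
      = b ⬝ᵥ μ + (h / 2) * (μ ⬝ᵥ H.mulVec μ) := by
    rw [hquad, hs, dotProduct_smul]
    simp only [smul_eq_mul]
    field_simp
  have h2 : ∀ i : Fin d,
      (lam i / (2 * h ^ 2)) * (f (x + h • u i) - f x)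
        + (lam i / (2 * h ^ 2)) * (f (x - h • u i) - f x)
      = (lam i / 2) * (u i ⬝ᵥ H.mulVec (u i)) := by
    intro i
    rw [hquad, hquad', hs, dotProduct_smul]
    simp only [smul_eq_mul]
    field_simp
    ring
  rw [h1]
  simp only [h2]
  have hAkl : ∑ k : Fin d, ∑ l : Fin d, A k l * H k l
      = ∑ i : Fin d, lam i * (u i ⬝ᵥ H.mulVec (u i)) := by
    have hd2 : ∀ k l, A k l = ∑ i, lam i * (u i k * u i l) :=
      spec_decomp d A u lam horth heig
    calc ∑ k : Fin d, ∑ l : Fin d, A k l * H k l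
        = ∑ k : Fin d, ∑ l : Fin d, ∑ i : Fin d, lam i * (u i k * u i l) * H k l := by
          refine Finset.sum_congr rfl fun k _ => Finset.sum_congr rfl fun l _ => ?_
          rw [hd2]
          rw [Finset.sum_mul]
      _ = ∑ k : Fin d, ∑ i : Fin d, ∑ l : Fin d, lam i * (u i k * u i l) * H k l := by
          exact Finset.sum_congr rfl fun k _ => Finset.sum_comm
      _ = ∑ i : Fin d, ∑ k : Fin d, ∑ l : Fin d, lam i * (u i k * u i l) * H k l :=
          Finset.sum_comm
      _ = ∑ i : Fin d, lam i * (u i ⬝ᵥ H.mulVec (u i)) := by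
          refine Finset.sum_congr rfl fun i _ => ?_
          simp only [dotProduct, Matrix.mulVec, Finset.mul_sum]
          refine Finset.sum_congr rfl fun k _ => Finset.sum_congr rfl fun l _ => ?_
          ring
  have hsum : ∑ i : Fin d, (lam i / 2) * (u i ⬝ᵥ H.mulVec (u i))
      = (1 / 2) * ∑ i : Fin d, lam i * (u i ⬝ᵥ H.mulVec (u i)) := by
    rw [Finset.mul_sum]
    exact Finset.sum_congr rfl fun i _ => by ring
  rw [hAkl, hsum]
  ring
end
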